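/- arXiv:1807.03033 — 4 statements merged into one kernel-verified Lean document; each statement's English description precedes it below -/
import Mathlib

section
/- Let q be a prime power, r, m ≥ 1, and let v ∈ F_q^r be a vector with exactly κ nonzero entries. The number of tuples of 2m vectors (x_1, y_1, …, x_m, y_m) ∈ (F_q^r)^{2m} such that Σ_{i=1}^m (x_i ⊙ y_i) = v, where ⊙ denotes coordinate-wise (Hadamard) multiplication, equals q^{r(m−1)} (q^m − 1)^κ (q^m + q − 1)^{r−κ}. -/
/-!
The condition `∑ i, x_i ⊙ y_i = v` splits into one scalar equation per coordinate, so the count is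
`∏ j, N_m(v j)`, where `N_n(c)` counts solutions of `x_1 y_1 + ⋯ + x_n y_n = c` in `F^{2n}`.
Fixing the last pair `(x, y)`: for `x = 0` there are `q · N_n(c)` solutions, and for each `x ≠ 0`
the map `y ↦ c - x y` is a bijection, so those pairs contribute every solution of every equation
of length `n`, i.e. `q^{2n}` each. Solving `N_{n+1}(c) = q N_n(c) + (q - 1) q^{2n}` gives
`N_{n+1}(c) = q^n (q^{n+1} - 1) + [c = 0] q^{n+1}`.
-/

open Finset

section Semiring

variable (F : Type*) [Semiring F] [Fintype F] [DecidableEq F]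

def sumMulCount (n : ℕ) (c : F) : ℕ :=
  #{h : Fin n → F × F | ∑ i, (h i).1 * (h i).2 = c}

lemma sumMulCount_zero (c : F) : sumMulCount F 0 c = if c = 0 then 1 else 0 := by
  by_cases hc : c = 0 <;> simp [sumMulCount, hc, eq_comm]

lemma sum_sumMulCount (n : ℕ) : ∑ c, sumMulCount F n c = Fintype.card F ^ (2 * n) := by
  simp only [sumMulCount]
  rw [← card_eq_sum_card_fiberwise (fun _ _ => mem_univ _), card_univ]
  simp [Fintype.card_prod, pow_mul', sq, mul_pow]

lemma card_sum_hadamard_eq_prod {ι : Type*} [Fintype ι] [DecidableEq ι] (m : ℕ) (v : ι → F) :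
    #{f : Fin m → (ι → F) × (ι → F) | ∑ i, (f i).1 * (f i).2 = v} =
      ∏ j, sumMulCount F m (v j) := by
  let transpose : (Fin m → (ι → F) × (ι → F)) ≃ (ι → Fin m → F × F) :=
    { toFun f j i := ((f i).1 j, (f i).2 j)
      invFun g i := (fun j => (g j i).1, fun j => (g j i).2)
      left_inv _ := rfl
      right_inv _ := rfl }
  simp only [sumMulCount]
  rw [← Fintype.card_piFinset]
  refine card_equiv transpose fun f => ?_
  simp [transpose, funext_iff]

end Semiring

section Ring

variable (F : Type*) [Ring F] [Fintype F] [DecidableEq F]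

lemma sumMulCount_succ_eq_sum (n : ℕ) (c : F) :
    sumMulCount F (n + 1) c = ∑ a : F × F, sumMulCount F n (c - a.1 * a.2) := by
  simp only [sumMulCount, card_filter]
  rw [← (Fin.consEquiv fun _ => F × F).sum_comp, Fintype.sum_prod_type]
  simp [Fin.sum_univ_succ, Fin.consEquiv, eq_sub_iff_add_eq']

end Ring

section DivisionRing

variable (F : Type*) [DivisionRing F] [Fintype F] [DecidableEq F]

lemma sum_sumMulCount_sub_mul {x : F} (hx : x ≠ 0) (n : ℕ) (c : F) :
    ∑ y, sumMulCount F n (c - x * y) = Fintype.card F ^ (2 * n) :=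
  (sum_sumMulCount F n) ▸ Fintype.sum_equiv ((Equiv.mulLeft₀ x hx).trans (Equiv.subLeft c)) _ _
    fun _ => rfl

lemma sumMulCount_succ (n : ℕ) (c : F) :
    sumMulCount F (n + 1) c =
      Fintype.card F * sumMulCount F n c + (Fintype.card F - 1) * Fintype.card F ^ (2 * n) := by
  rw [sumMulCount_succ_eq_sum, Fintype.sum_prod_type, ← add_sum_erase _ _ (mem_univ 0),
    sum_congr rfl fun x hx => sum_sumMulCount_sub_mul F (ne_of_mem_erase hx) n c]
  simp [card_erase_of_mem, mul_comm]

lemma sumMulCount_succ_eq (n : ℕ) (c : F) :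
    sumMulCount F (n + 1) c = Fintype.card F ^ n * (Fintype.card F ^ (n + 1) - 1) +
      if c = 0 then Fintype.card F ^ (n + 1) else 0 := by
  have hq : 1 ≤ Fintype.card F := Fintype.card_pos
  induction n with
  | zero => by_cases hc : c = 0 <;> simp [sumMulCount_succ, sumMulCount_zero, hc]; omega
  | succ n ih =>
    have h₁ : 1 ≤ Fintype.card F ^ (n + 1) := Nat.one_le_pow _ _ hq
    have h₂ : 1 ≤ Fintype.card F ^ (n + 2) := Nat.one_le_pow _ _ hq
    rw [sumMulCount_succ, ih]
    split_ifs <;> zify [hq, h₁, h₂] <;> ring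

lemma sumMulCount_succ_of_ne_zero (n : ℕ) {c : F} (hc : c ≠ 0) :
    sumMulCount F (n + 1) c = Fintype.card F ^ n * (Fintype.card F ^ (n + 1) - 1) := by
  simp [sumMulCount_succ_eq, hc]

lemma sumMulCount_succ_zero (n : ℕ) :
    sumMulCount F (n + 1) 0 =
      Fintype.card F ^ n * (Fintype.card F ^ (n + 1) + Fintype.card F - 1) := by
  have hq : 1 ≤ Fintype.card F := Fintype.card_pos
  have h₁ : 1 ≤ Fintype.card F ^ (n + 1) := Nat.one_le_pow _ _ hq
  rw [sumMulCount_succ_eq, if_pos rfl]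
  zify [hq, h₁, h₁.trans (Nat.le_add_right _ (Fintype.card F))]
  ring

end DivisionRing

theorem elementwise_psi_general
    (F : Type*) [Field F] [Fintype F] [DecidableEq F]
    (r m : ℕ) (hm : 1 ≤ m)
    (v : Fin r → F)
    (κ : ℕ) (hκ : κ = (Finset.univ.filter (fun j : Fin r => v j ≠ 0)).card) :
    (Finset.univ.filter
        (fun f : Fin m → (Fin r → F) × (Fin r → F) =>
          ∑ i, (f i).1 * (f i).2 = v)).card
      = Fintype.card F ^ (r * (m - 1)) * (Fintype.card F ^ m - 1) ^ κ *
          (Fintype.card F ^ m + Fintype.card F - 1) ^ (r - κ) := by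
  obtain ⟨n, rfl⟩ : ∃ n, m = n + 1 := ⟨m - 1, by omega⟩
  set q := Fintype.card F
  have hfactor : ∀ j, sumMulCount F (n + 1) (v j) =
      if v j ≠ 0 then q ^ n * (q ^ (n + 1) - 1) else q ^ n * (q ^ (n + 1) + q - 1) := by
    intro j
    split_ifs with h
    · exact sumMulCount_succ_of_ne_zero F n h
    · rw [not_not.mp h, sumMulCount_succ_zero]
  have hsplit : κ + #{j | ¬v j ≠ 0} = r := by
    rw [hκ, card_filter_add_card_filter_not, card_univ, Fintype.card_fin]
  rw [card_sum_hadamard_eq_prod, Fintype.prod_congr _ _ hfactor, prod_ite, prod_const, prod_const,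
    ← hκ, Nat.add_sub_cancel]
  generalize #{j | ¬v j ≠ 0} = z at hsplit ⊢
  subst hsplit
  rw [Nat.add_sub_cancel_left]
  ring

theorem elementwise_psi
    (F : Type*) [Field F] [Fintype F] [DecidableEq F]
    (r m : ℕ) (hr : 1 ≤ r) (hm : 1 ≤ m)
    (v : Fin r → F)
    (κ : ℕ) (hκ : κ = (Finset.univ.filter (fun j : Fin r => v j ≠ 0)).card) :
    (Finset.univ.filter
        (fun f : Fin m → (Fin r → F) × (Fin r → F) =>
          ∑ i, (f i).1 * (f i).2 = v)).card
      = Fintype.card F ^ (r * (m - 1)) * (Fintype.card F ^ m - 1) ^ κ *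
          (Fintype.card F ^ m + Fintype.card F - 1) ^ (r - κ) :=
  elementwise_psi_general F r m hm v κ hκ
end

section
/- Let q be a prime power, r ≥ 1, m ≥ 1, L ≥ 2m. The number of nonzero tuples (s_1,…,s_L) ∈ (F_q^r)^L \ {0} such that Σ_{i=1}^m (s_{2i−1} ⊙ s_{2i}) = 0, where ⊙ is coordinate-wise multiplication, equals q^{r(L−m−1)} (q^m + q − 1)^r − 1. -/
lemma dot_ker_card {F : Type*} [Field F] [Fintype F] [DecidableEq F]
    {m : ℕ} (hm : 1 ≤ m) (a : Fin m → F) (ha : a ≠ 0) :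
    Fintype.card {b : Fin m → F // ∑ i, a i * b i = 0} = Fintype.card F ^ (m - 1) := by
  classical
  let f : (Fin m → F) →ₗ[F] F :=
    { toFun := fun b => ∑ i, a i * b i
      map_add' := fun x y => by simp [mul_add, Finset.sum_add_distrib]
      map_smul' := fun c x => by simp [Finset.mul_sum, mul_left_comm] }
  obtain ⟨j, hj⟩ := Function.ne_iff.mp ha
  have hj : a j ≠ 0 := hj
  have hsurj : Function.Surjective f := by
    intro c
    refine ⟨Pi.single j ((a j)⁻¹ * c), ?_⟩
    have : f (Pi.single j ((a j)⁻¹ * c)) = ∑ i, a i * (Pi.single j ((a j)⁻¹ * c) : Fin m → F) i := rfl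
    rw [this, Finset.sum_eq_single j]
    · rw [Pi.single_eq_same, ← mul_assoc, mul_inv_cancel₀ hj, one_mul]
    · intro i _ hij; rw [Pi.single_eq_of_ne hij, mul_zero]
    · simp
  have h1 : Fintype.card {b : Fin m → F // ∑ i, a i * b i = 0}
      = Fintype.card (LinearMap.ker f) :=
    Fintype.card_congr (Equiv.subtypeEquivRight fun b => by
      rw [LinearMap.mem_ker]; exact Iff.rfl)
  have h2 := LinearMap.finrank_range_add_finrank_ker f
  rw [LinearMap.range_eq_top.mpr hsurj, finrank_top, Module.finrank_self,
    Module.finrank_fin_fun] at h2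
  clear_value f
  have h3 : Module.finrank F (LinearMap.ker f) = m - 1 := by
    clear h1
    omega
  rw [h1, Module.card_eq_pow_finrank (K := F), h3]

lemma nat_aux (q m : ℕ) (hq : 1 ≤ q) (hm : 1 ≤ m) :
    q ^ m + (q ^ m - 1) * q ^ (m - 1) = q ^ (m - 1) * (q ^ m + q - 1) := by
  have h : q ^ m = q ^ (m - 1) * q := by
    rw [← pow_succ]; congr 1; omega
  have h1 : 1 ≤ q ^ (m - 1) := Nat.one_le_pow _ _ hq
  set t := q ^ (m - 1) with ht
  rw [h]
  have e1 : (t * q - 1) * t = t * t * q - t := by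
    rw [Nat.sub_mul, one_mul, mul_right_comm]
  have e2 : t * (t * q + q - 1) = t * t * q + t * q - t := by
    rw [Nat.mul_sub, Nat.mul_add, mul_one, ← mul_assoc]
  have hb : t ≤ t * t * q := by nlinarith
  rw [e1, e2]
  omega

lemma dot_card {F : Type*} [Field F] [Fintype F] [DecidableEq F]
    {m : ℕ} (hm : 1 ≤ m) :
    Fintype.card {p : (Fin m → F) × (Fin m → F) // ∑ i, p.1 i * p.2 i = 0}
      = Fintype.card F ^ (m - 1) * (Fintype.card F ^ m + Fintype.card F - 1) := by
  classical
  have e1 : {p : (Fin m → F) × (Fin m → F) // ∑ i, p.1 i * p.2 i = 0} ≃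
      Σ a : Fin m → F, {b : Fin m → F // ∑ i, a i * b i = 0} :=
    { toFun := fun x => ⟨x.1.1, x.1.2, x.2⟩
      invFun := fun y => ⟨(y.1, y.2.1), y.2.2⟩
      left_inv := fun x => rfl
      right_inv := fun y => rfl }
  rw [Fintype.card_congr e1, Fintype.card_sigma]
  have hstep : ∀ a : Fin m → F, Fintype.card {b : Fin m → F // ∑ i, a i * b i = 0}
      = if a = 0 then Fintype.card F ^ m else Fintype.card F ^ (m - 1) := by
    intro a
    by_cases ha : a = 0
    · subst ha
      rw [if_pos rfl]
      have : Fintype.card {b : Fin m → F // ∑ i, (0 : Fin m → F) i * b i = 0}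
          = Fintype.card (Fin m → F) :=
        Fintype.card_congr (Equiv.subtypeUnivEquiv (by simp))
      rw [this, Fintype.card_fun, Fintype.card_fin]
    · rw [if_neg ha, dot_ker_card hm a ha]
  rw [Finset.sum_congr rfl (fun a _ => hstep a), Finset.sum_ite, Finset.sum_const,
    Finset.sum_const, Finset.filter_eq', if_pos (Finset.mem_univ _), Finset.card_singleton,
    Finset.filter_ne', Finset.card_erase_of_mem (Finset.mem_univ _), Finset.card_univ,
    Fintype.card_fun, Fintype.card_fin, one_smul, smul_eq_mul]
  exact nat_aux (Fintype.card F) m Fintype.card_pos hm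

def interleaveEquiv (F : Type*) {m L : ℕ} (hL : 2 * m ≤ L) :
    (Fin L → F) ≃ ((Fin m → F) × (Fin m → F)) × (Fin (L - 2 * m) → F) where
  toFun u := ((fun i : Fin m => u ⟨2 * i.1, by have := i.isLt; omega⟩,
               fun i : Fin m => u ⟨2 * i.1 + 1, by have := i.isLt; omega⟩),
              fun k : Fin (L - 2 * m) => u ⟨2 * m + k.1, by have := k.isLt; omega⟩)
  invFun x j :=
    if h : j.1 < 2 * m then
      (if h2 : j.1 % 2 = 0 then x.1.1 ⟨j.1 / 2, by omega⟩ else x.1.2 ⟨j.1 / 2, by omega⟩)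
    else x.2 ⟨j.1 - 2 * m, by have := j.isLt; omega⟩
  left_inv u := by
    funext j
    by_cases h : j.1 < 2 * m
    · by_cases h2 : j.1 % 2 = 0
      · simp only [dif_pos h, dif_pos h2]
        exact congrArg u (Fin.ext (show 2 * (j.1 / 2) = j.1 by omega))
      · simp only [dif_pos h, dif_neg h2]
        exact congrArg u (Fin.ext (show 2 * (j.1 / 2) + 1 = j.1 by omega))
    · simp only [dif_neg h]
      exact congrArg u (Fin.ext (show 2 * m + (j.1 - 2 * m) = j.1 by omega))
  right_inv x := by
    refine Prod.ext (Prod.ext ?_ ?_) ?_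
    · funext i
      have h : 2 * i.1 < 2 * m := by have := i.isLt; omega
      have h2 : 2 * i.1 % 2 = 0 := by omega
      simp only [dif_pos h, dif_pos h2]
      exact congrArg x.1.1 (Fin.ext (show 2 * i.1 / 2 = i.1 by omega))
    · funext i
      have h : 2 * i.1 + 1 < 2 * m := by have := i.isLt; omega
      have h2 : ¬ (2 * i.1 + 1) % 2 = 0 := by omega
      simp only [dif_pos h, dif_neg h2]
      exact congrArg x.1.2 (Fin.ext (show (2 * i.1 + 1) / 2 = i.1 by omega))
    · funext k
      have h : ¬ (2 * m + k.1 < 2 * m) := by omega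
      simp only [dif_neg h]
      exact congrArg x.2 (Fin.ext (show 2 * m + k.1 - 2 * m = k.1 by omega))


lemma col_card {F : Type*} [Field F] [Fintype F] [DecidableEq F]
    {m L : ℕ} (hm : 1 ≤ m) (hL : 2 * m ≤ L) :
    Fintype.card {u : Fin L → F // ∑ i : Fin m,
        u ⟨2 * i.1, by have := i.isLt; omega⟩ * u ⟨2 * i.1 + 1, by have := i.isLt; omega⟩ = 0}
      = Fintype.card F ^ (L - m - 1) * (Fintype.card F ^ m + Fintype.card F - 1) := by
  classical
  have e2 : {u : Fin L → F // ∑ i : Fin m,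
        u ⟨2 * i.1, by have := i.isLt; omega⟩ * u ⟨2 * i.1 + 1, by have := i.isLt; omega⟩ = 0}
      ≃ {x : ((Fin m → F) × (Fin m → F)) × (Fin (L - 2 * m) → F) // ∑ i, x.1.1 i * x.1.2 i = 0} :=
    (interleaveEquiv F hL).subtypeEquiv (fun u => Iff.rfl)
  have e3 : {x : ((Fin m → F) × (Fin m → F)) × (Fin (L - 2 * m) → F) // ∑ i, x.1.1 i * x.1.2 i = 0}
      ≃ {d : (Fin m → F) × (Fin m → F) // ∑ i, d.1 i * d.2 i = 0} × (Fin (L - 2 * m) → F) :=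
    { toFun := fun x => (⟨x.1.1, x.2⟩, x.1.2)
      invFun := fun y => ⟨(y.1.1, y.2), y.1.2⟩
      left_inv := fun x => rfl
      right_inv := fun y => rfl }
  rw [Fintype.card_congr (e2.trans e3), Fintype.card_prod, dot_card hm,
    Fintype.card_fun, Fintype.card_fin, mul_right_comm, ← pow_add]
  congr 2
  omega

theorem elementwise_count_zero
    (F : Type*) [Field F] [Fintype F] [DecidableEq F]
    (r m L : ℕ) (hr : 1 ≤ r) (hm : 1 ≤ m) (hL : 2 * m ≤ L) :
    (Finset.univ.filter
        (fun s : Fin L → (Fin r → F) => s ≠ 0 ∧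
          ∑ i : Fin m, s ⟨2 * i.1, by have := i.isLt; omega⟩ *
            s ⟨2 * i.1 + 1, by have := i.isLt; omega⟩ = 0)).card
      = Fintype.card F ^ (r * (L - m - 1)) *
          (Fintype.card F ^ m + Fintype.card F - 1) ^ r - 1 := by
  classical
  have h0 : (0 : Fin L → Fin r → F) ∈ Finset.univ.filter
        (fun s : Fin L → (Fin r → F) =>
          ∑ i : Fin m, s ⟨2 * i.1, by have := i.isLt; omega⟩ *
            s ⟨2 * i.1 + 1, by have := i.isLt; omega⟩ = 0) :=
    Finset.mem_filter.mpr ⟨Finset.mem_univ _, by simp⟩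
  have hsplit : (Finset.univ.filter
        (fun s : Fin L → (Fin r → F) => s ≠ 0 ∧
          ∑ i : Fin m, s ⟨2 * i.1, by have := i.isLt; omega⟩ *
            s ⟨2 * i.1 + 1, by have := i.isLt; omega⟩ = 0))
      = (Finset.univ.filter
        (fun s : Fin L → (Fin r → F) =>
          ∑ i : Fin m, s ⟨2 * i.1, by have := i.isLt; omega⟩ *
            s ⟨2 * i.1 + 1, by have := i.isLt; omega⟩ = 0)).erase 0 := by
    ext s
    simp only [Finset.mem_erase, Finset.mem_filter, Finset.mem_univ, true_and]
  have key : (Finset.univ.filter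
        (fun s : Fin L → (Fin r → F) =>
          ∑ i : Fin m, s ⟨2 * i.1, by have := i.isLt; omega⟩ *
            s ⟨2 * i.1 + 1, by have := i.isLt; omega⟩ = 0)).card
      = Fintype.card F ^ (r * (L - m - 1)) *
          (Fintype.card F ^ m + Fintype.card F - 1) ^ r := by
    rw [← Fintype.card_subtype]
    have E1 : {s : Fin L → Fin r → F // ∑ i : Fin m,
          s ⟨2 * i.1, by have := i.isLt; omega⟩ *
            s ⟨2 * i.1 + 1, by have := i.isLt; omega⟩ = 0}
        ≃ {s : Fin L → Fin r → F // ∀ j : Fin r, ∑ i : Fin m,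
          s ⟨2 * i.1, by have := i.isLt; omega⟩ j *
            s ⟨2 * i.1 + 1, by have := i.isLt; omega⟩ j = 0} :=
      Equiv.subtypeEquivRight (fun s => by
        rw [funext_iff]
        refine forall_congr' fun j => ?_
        rw [Finset.sum_apply]
        simp only [Pi.mul_apply, Pi.zero_apply])
    have E2 : {s : Fin L → Fin r → F // ∀ j : Fin r, ∑ i : Fin m,
          s ⟨2 * i.1, by have := i.isLt; omega⟩ j *
            s ⟨2 * i.1 + 1, by have := i.isLt; omega⟩ j = 0}
        ≃ {t : Fin r → Fin L → F // ∀ j : Fin r, ∑ i : Fin m,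
          t j ⟨2 * i.1, by have := i.isLt; omega⟩ *
            t j ⟨2 * i.1 + 1, by have := i.isLt; omega⟩ = 0} :=
      (Equiv.piComm (fun (_ : Fin L) (_ : Fin r) => F)).subtypeEquiv (fun s => Iff.rfl)
    have E3 : {t : Fin r → Fin L → F // ∀ j : Fin r, ∑ i : Fin m,
          t j ⟨2 * i.1, by have := i.isLt; omega⟩ *
            t j ⟨2 * i.1 + 1, by have := i.isLt; omega⟩ = 0}
        ≃ ∀ _ : Fin r, {u : Fin L → F // ∑ i : Fin m,
          u ⟨2 * i.1, by have := i.isLt; omega⟩ *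
            u ⟨2 * i.1 + 1, by have := i.isLt; omega⟩ = 0} :=
      Equiv.subtypePiEquivPi (p := fun (_ : Fin r) (u : Fin L → F) => ∑ i : Fin m,
          u ⟨2 * i.1, by have := i.isLt; omega⟩ *
            u ⟨2 * i.1 + 1, by have := i.isLt; omega⟩ = 0)
    rw [Fintype.card_congr (E1.trans (E2.trans E3)), Fintype.card_pi]
    rw [Finset.prod_const, col_card hm hL, Finset.card_univ, Fintype.card_fin,
      mul_pow, ← pow_mul, mul_comm (L - m - 1) r]
  rw [hsplit, Finset.card_erase_of_mem h0, key]
end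

section
/- Let q be a prime power, r ≥ 1, m ≥ 1, L ≥ 2m, and let v ∈ F_{q^r}^L be counted via the field F_{q^r}. For a nonzero w ∈ F_{q^r}, the number of nonzero tuples (s_1,…,s_L) ∈ F_{q^r}^L with Σ_{i=1}^m s_{2i−1}·s_{2i} = w (field multiplication) is q^{r(L−m−1)}(q^{rm} − 1), and this count is strictly greater than the count q^{r(L−m−1)}(q^m − 1)^r obtained with coordinate-wise multiplication in F_q^r for a vector all of whose r entries are nonzero, whenever r ≥ 2. -/
/-!
Splitting `s ∈ E^L` into its even and odd coordinates is a surjective additive map onto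
`E^m × E^m`, so each solution `(x, y)` of `x ⬝ᵥ y = w` has `Q^(L-2m)` preimages, `Q = q^r`.
For `x ≠ 0` the map `y ↦ x ⬝ᵥ y` is a nonzero linear functional, whose fibres have `Q^(m-1)`
elements; `x = 0` contributes nothing as `w ≠ 0`. The inequality is `b^r + 1 < (b + 1)^r`
for `b = q^m - 1 ≥ 1`.
-/

open Finset

namespace AddMonoidHom

variable {G H : Type*} [AddGroup G] [Fintype G] [AddGroup H] [Fintype H] [DecidableEq H]

theorem card_fiber_of_surjective (f : G →+ H) (hf : Function.Surjective f) (y : H) :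
    #{x | f x = y} = Fintype.card G / Fintype.card H := by
  have hG : Fintype.card G = Fintype.card H * #{x | f x = y} := by
    rw [← card_univ, card_eq_sum_card_fiberwise (t := univ) (fun x _ => mem_univ (f x))]
    simp only [fun y' => card_fiber_eq_of_mem_range f (hf y') (hf y), sum_const, card_univ,
      smul_eq_mul]
  rw [hG, Nat.mul_div_cancel_left _ Fintype.card_pos]

theorem card_filter_comp_of_surjective (f : G →+ H) (hf : Function.Surjective f)
    (P : H → Prop) [DecidablePred P] :
    #{x | P (f x)} = #{y | P y} * (Fintype.card G / Fintype.card H) := by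
  rw [card_eq_sum_card_fiberwise (t := {y | P y}) (fun x hx => by simpa using hx)]
  refine sum_const_nat fun y hy => ?_
  rw [filter_filter, ← card_fiber_of_surjective f hf y]
  congr 1
  exact filter_congr fun x _ => ⟨And.right, fun hx => ⟨hx ▸ (mem_filter.1 hy).2, hx⟩⟩

end AddMonoidHom

section dotProduct

variable {ι E : Type*} [Fintype ι] [DecidableEq ι] [Field E]

theorem dotProduct_left_surjective {x : ι → E} (hx : x ≠ 0) :
    Function.Surjective (x ⬝ᵥ ·) := by
  obtain ⟨j, hj⟩ := Function.ne_iff.1 hx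
  exact fun c => ⟨Pi.single j (c / x j), by simp [dotProduct_single, mul_div_cancel₀ _ hj]⟩

variable [Fintype E] [DecidableEq E]

theorem card_dotProduct_eq_of_ne_zero {x : ι → E} (hx : x ≠ 0) (w : E) :
    #{y | x ⬝ᵥ y = w} = Fintype.card E ^ (Fintype.card ι - 1) := by
  obtain ⟨j, -⟩ := Function.ne_iff.1 hx
  have : Nonempty ι := ⟨j⟩
  refine ((AddMonoidHom.mk' (x ⬝ᵥ ·) (dotProduct_add x)).card_fiber_of_surjective
    (dotProduct_left_surjective hx) w).trans ?_
  rw [Fintype.card_fun]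
  exact Nat.div_eq_of_eq_mul_left Fintype.card_pos 
    (pow_sub_one_mul Fintype.card_ne_zero _).symm

theorem card_dotProduct_pairs_eq {w : E} (hw : w ≠ 0) :
    #{p : (ι → E) × (ι → E) | p.1 ⬝ᵥ p.2 = w}
      = (Fintype.card E ^ Fintype.card ι - 1) * Fintype.card E ^ (Fintype.card ι - 1) := by
  rw [card_filter, Fintype.sum_prod_type]
  simp only [← card_filter]
  rw [Fintype.sum_eq_add_sum_compl 0, sum_congr rfl fun x hx =>
    card_dotProduct_eq_of_ne_zero (by simpa using hx) w]
  simp [hw.symm, card_compl]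

end dotProduct

theorem Function.Injective.surjective_comp_prod {α β γ κ : Type*} [Nonempty γ]
    {f : α → κ} {g : β → κ} (hfg : Function.Injective (Sum.elim f g)) :
    Function.Surjective fun s : κ → γ => (s ∘ f, s ∘ g) := by
  rintro ⟨x, y⟩
  obtain ⟨s, hs⟩ := hfg.surjective_comp_right (Sum.elim x y)
  exact ⟨s, Prod.ext (funext fun a => congr_fun hs (.inl a))
    (funext fun b => congr_fun hs (.inr b))⟩

theorem pow_add_one_lt_add_one_pow {b r : ℕ} (hb : 1 ≤ b) (hr : 2 ≤ r) :
    b ^ r + 1 < (b + 1) ^ r := by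
  obtain ⟨k, rfl⟩ := Nat.exists_eq_add_of_le' hr
  have hsum : b ^ (k + 1) + 1 ≤ (b + 1) ^ (k + 1) := by
    simpa using pow_add_pow_le (Nat.zero_le b) zero_le_one (Nat.succ_ne_zero k)
  have hb_pow := Nat.one_le_pow (k + 1) b hb
  rw [pow_succ b (k + 1), pow_succ (b + 1) (k + 1)]
  nlinarith

theorem sub_one_pow_lt_pow_mul_sub_one {q r m : ℕ} (hq : 2 ≤ q) (hr : 2 ≤ r) (hm : 1 ≤ m) :
    (q ^ m - 1) ^ r < q ^ (r * m) - 1 := by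
  have hqm : 2 ≤ q ^ m := le_self_pow₀ (by omega) (by omega) |>.trans' hq
  have := pow_add_one_lt_add_one_pow (b := q ^ m - 1) (by omega) hr
  rw [Nat.sub_add_cancel (by omega), ← pow_mul, mul_comm] at this
  omega

theorem card_sum_even_mul_odd_eq {E : Type*} [Field E] [Fintype E] [DecidableEq E] {m L : ℕ}
    (hL : 2 * m ≤ L) {w : E} (hw : w ≠ 0) :
    #{s : Fin L → E |
        ∑ i : Fin m, s ⟨2 * i.1, by omega⟩ * s ⟨2 * i.1 + 1, by omega⟩ = w}
      = (Fintype.card E ^ m - 1) * Fintype.card E ^ (m - 1) * Fintype.card E ^ (L - 2 * m) := by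
  let even : Fin m → Fin L := fun i => ⟨2 * i.1, by omega⟩
  let odd : Fin m → Fin L := fun i => ⟨2 * i.1 + 1, by omega⟩
  have hinj : Function.Injective (Sum.elim even odd) :=
    .sumElim (fun i j h => by simp [even, Fin.ext_iff] at h; omega)
      (fun i j h => by simp [odd, Fin.ext_iff] at h; omega)
      fun i j h => by simp [even, odd, Fin.ext_iff] at h; omega
  let f : (Fin L → E) →+ (Fin m → E) × (Fin m → E) :=
    AddMonoidHom.mk' (fun s => (s ∘ even, s ∘ odd)) fun _ _ => rfl
  have := f.card_filter_comp_of_surjective hinj.surjective_comp_prod (fun p => p.1 ⬝ᵥ p.2 = w)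
  rw [card_dotProduct_pairs_eq hw, Fintype.card_prod, Fintype.card_fun, Fintype.card_fun,
    Fintype.card_fin, Fintype.card_fin, ← pow_add, ← two_mul, Nat.pow_div hL Fintype.card_pos]
    at this
  exact this

theorem field_count_vs_elementwise
    (E : Type*) [Field E] [Fintype E] [DecidableEq E]
    (q r m L : ℕ) (hE : Fintype.card E = q ^ r)
    (hr : 2 ≤ r) (hm : 1 ≤ m) (hL : 2 * m ≤ L)
    (w : E) (hw : w ≠ 0) :
    (Finset.univ.filter
        (fun s : Fin L → E => s ≠ 0 ∧
          ∑ i : Fin m, s ⟨2 * i.1, by have := i.isLt; omega⟩ *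
            s ⟨2 * i.1 + 1, by have := i.isLt; omega⟩ = w)).card
      = q ^ (r * (L - m - 1)) * (q ^ (r * m) - 1)
    ∧ q ^ (r * (L - m - 1)) * (q ^ (r * m) - 1)
        > q ^ (r * (L - m - 1)) * ((q ^ m - 1) ^ r) := by
  have hq : 2 ≤ q := (Nat.one_lt_pow_iff (by omega)).1 (hE ▸ Fintype.one_lt_card)
  refine ⟨?_, Nat.mul_lt_mul_of_pos_left (sub_one_pow_lt_pow_mul_sub_one hq hr hm)
    (by positivity)⟩
  have hnonzero : ∀ s : Fin L → E, ∑ i : Fin m, s ⟨2 * i.1, by omega⟩ *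
      s ⟨2 * i.1 + 1, by omega⟩ = w → s ≠ 0 := by
    rintro s hs rfl
    simp [eq_comm, hw] at hs
  rw [filter_congr fun s _ => and_iff_right_of_imp (hnonzero s), card_sum_even_mul_odd_eq hL hw, hE,
    ← pow_mul, ← pow_mul, ← pow_mul, mul_assoc, ← pow_add, ← mul_add, mul_comm]
  congr 3
  omega
end

section
/- Let q be a prime power and m ≥ 1. For any nonzero K ∈ F_q, ψ_m(K) = Σ_{i=0}^{m−1} C(m,i) (2q−1)^i (q−1)^{m−i} |S_{m−i}(K)|, where ψ_m(K) is the number of 2m-tuples in F_q^{2m} with Σ x_j y_j = K and |S_t(K)| = ((q−1)^t − (−1)^t)/q. -/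
/-!
Group the solutions by the vector of products `g j = x j * y j`: a coordinate pair with
product `g j` can be chosen in `2q - 1` ways if `g j = 0` and in `q - 1` ways otherwise.
Grouping `g` further by its zero set `s`, the remaining coordinates form a tuple in
`S_{m - #s}(K)`; summing over `s` by size produces the binomial coefficients, and the term
`#s = m` vanishes because `K ≠ 0`.
-/

open Finset

theorem card_filter_comp_eq_sum_prod_card_fiber {ι α β : Type*} [Fintype ι] [DecidableEq ι]
    [Fintype α] [Fintype β] [DecidableEq β] (φ : α → β) (P : (ι → β) → Prop) [DecidablePred P] :
    #{f : ι → α | P (fun j ↦ φ (f j))} = ∑ g with P g, ∏ j, #{a | φ a = g j} := by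
  rw [card_eq_sum_card_fiberwise (f := fun f j ↦ φ (f j)) (t := {g | P g})
    fun f hf ↦ by simpa using hf]
  refine sum_congr rfl fun g hg ↦ ?_
  rw [← Fintype.card_piFinset]
  congr 1
  ext f
  simp only [mem_filter, mem_univ, true_and, Fintype.mem_piFinset, funext_iff] at hg ⊢
  exact ⟨And.right, fun h ↦ ⟨by simpa [h] using hg, h⟩⟩

theorem card_mul_eq_zero {M : Type*} [MulZeroClass M] [NoZeroDivisors M] [Fintype M]
    [DecidableEq M] :
    #{p : M × M | p.1 * p.2 = 0} = 2 * Fintype.card M - 1 := by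
  have h : ({p : M × M | p.1 * p.2 = 0} : Finset _) = ({0} ×ˢ univ) ∪ (univ ×ˢ {0}) := by
    ext p; simp only [mem_filter, mem_univ, true_and, mem_union, mem_product, mem_singleton,
      mul_eq_zero, and_true]
  have hinter : (({0} ×ˢ univ) ∩ (univ ×ˢ {0}) : Finset (M × M)) = {(0, 0)} := by
    ext p; simp only [mem_inter, mem_product, mem_singleton, mem_univ, and_true, true_and,
      Prod.ext_iff]
  rw [h, card_union, hinter]
  simp only [card_product, card_singleton, card_univ]
  omega

theorem card_mul_eq_of_ne_zero {G : Type*} [GroupWithZero G] [Fintype G] [DecidableEq G]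
    {a : G} (ha : a ≠ 0) :
    #{p : G × G | p.1 * p.2 = a} = Fintype.card G - 1 := by
  have fst_ne_zero {p : G × G} (hp : p.1 * p.2 = a) : p.1 ≠ 0 := by
    rintro h0; simp [h0, ha.symm] at hp
  rw [← card_univ, ← card_erase_of_mem (mem_univ 0)]
  refine card_nbij' Prod.fst (fun x ↦ (x, x⁻¹ * a)) ?_ ?_ ?_ ?_
  · intro p hp
    simp only [coe_filter, mem_univ, true_and, Set.mem_ofPred_eq] at hp
    simpa using fst_ne_zero hp
  · intro x hx
    simp only [coe_erase, coe_univ, Set.mem_sdiff, Set.mem_univ, Set.mem_singleton_iff,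
      true_and] at hx
    simp [mul_inv_cancel_left₀ hx]
  · intro p hp
    simp only [coe_filter, mem_univ, true_and, Set.mem_ofPred_eq] at hp
    ext <;> simp [← hp, inv_mul_cancel_left₀ (fst_ne_zero hp)]
  · intro x _; rfl

theorem card_filter_mul_eq {G : Type*} [GroupWithZero G] [Fintype G] [DecidableEq G] (a : G) :
    #{p : G × G | p.1 * p.2 = a}
      = if a = 0 then 2 * Fintype.card G - 1 else Fintype.card G - 1 := by
  split_ifs with ha
  · rw [ha, card_mul_eq_zero]
  · exact card_mul_eq_of_ne_zero ha

section NonzeroTuples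

variable {M : Type*} [AddCommMonoid M] [Fintype M] [DecidableEq M]

def nonzeroTuplesWithSum (ι : Type*) [Fintype ι] [DecidableEq ι] (K : M) : Finset (ι → M) :=
  {y | (∀ j, y j ≠ 0) ∧ ∑ j, y j = K}

variable {ι κ : Type*} [Fintype ι] [DecidableEq ι] [Fintype κ] [DecidableEq κ]

theorem mem_nonzeroTuplesWithSum {K : M} {y : ι → M} :
    y ∈ nonzeroTuplesWithSum ι K ↔ (∀ j, y j ≠ 0) ∧ ∑ j, y j = K := by
  simp [nonzeroTuplesWithSum]

theorem card_nonzeroTuplesWithSum_congr (e : ι ≃ κ) (K : M) :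
    #(nonzeroTuplesWithSum ι K) = #(nonzeroTuplesWithSum κ K) := by
  refine card_equiv (e.arrowCongr (Equiv.refl M)) fun y ↦ ?_
  simp [mem_nonzeroTuplesWithSum, e.forall_congr_left, e.symm.sum_comp]

theorem nonzeroTuplesWithSum_of_isEmpty [IsEmpty ι] {K : M} (hK : K ≠ 0) :
    nonzeroTuplesWithSum ι K = ∅ := by
  ext y
  simp [mem_nonzeroTuplesWithSum, hK.symm]

omit [Fintype M] [DecidableEq M] in
theorem sum_eq_sum_subtype_notMem {s : Finset ι} {g : ι → M} (hg : ∀ j ∈ s, g j = 0) :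
    ∑ j, g j = ∑ j : {j // j ∉ s}, g j := by
  rw [← Fintype.sum_subtype_add_sum_subtype (· ∈ s) g,
    sum_eq_zero fun (j : {j // j ∈ s}) _ ↦ hg j j.2, zero_add]

theorem card_sum_eq_and_zeroSet_eq (s : Finset ι) (K : M) :
    #{g : ι → M | ∑ j, g j = K ∧ ({j | g j = 0} : Finset ι) = s}
      = #(nonzeroTuplesWithSum {j // j ∉ s} K) := by
  refine card_nbij' (fun g j ↦ g j) (fun y j ↦ if h : j ∈ s then 0 else y ⟨j, h⟩)
    ?_ ?_ ?_ ?_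
  · intro g hg
    simp only [coe_filter, mem_univ, true_and, Set.mem_ofPred_eq, mem_coe,
      mem_nonzeroTuplesWithSum] at hg ⊢
    obtain ⟨hsum, hzero⟩ := hg
    simp only [Finset.ext_iff, mem_filter, mem_univ, true_and] at hzero
    refine ⟨fun j hj ↦ j.2 ((hzero j).1 hj), ?_⟩
    rw [← sum_eq_sum_subtype_notMem fun j hj ↦ (hzero j).2 hj, hsum]
  · intro y hy
    simp only [coe_filter, mem_univ, true_and, Set.mem_ofPred_eq, mem_coe,
      mem_nonzeroTuplesWithSum] at hy ⊢
    obtain ⟨hne, hsum⟩ := hy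
    refine ⟨?_, ?_⟩
    · rw [sum_eq_sum_subtype_notMem fun j hj ↦ dif_pos hj, ← hsum]
      exact Fintype.sum_congr _ _ fun j ↦ dif_neg j.2
    · ext j
      by_cases hj : j ∈ s <;> simp [hj, hne]
  · intro g hg
    simp only [coe_filter, mem_univ, true_and, Set.mem_ofPred_eq] at hg
    funext j
    by_cases hj : j ∈ s
    · have hgj : g j = 0 := by simpa using (Finset.ext_iff.1 hg.2 j).2 hj
      simp [hj, hgj]
    · simp [hj]
  · intro y _
    funext j
    simp [j.2]

omit [Fintype M] in
theorem prod_ite_eq_zero_of_zeroSet {R : Type*} [CommMonoid R] (A B : R) {s : Finset ι}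
    {g : ι → M} (hg : ({j | g j = 0} : Finset ι) = s) :
    ∏ j, (if g j = 0 then A else B) = A ^ #s * B ^ (Fintype.card ι - #s) := by
  rw [prod_ite, filter_not, hg, ← compl_eq_univ_sdiff, prod_const, prod_const, card_compl]

theorem sum_prod_ite_eq_zero_eq_sum_finset {R : Type*} [CommSemiring R] (A B : R) (K : M) :
    ∑ g : ι → M with ∑ j, g j = K, ∏ j, (if g j = 0 then A else B)
      = ∑ s : Finset ι, A ^ #s * B ^ (Fintype.card ι - #s) *
          #(nonzeroTuplesWithSum (Fin (Fintype.card ι - #s)) K) := by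
  rw [← sum_fiberwise _ (fun g : ι → M ↦ ({j | g j = 0} : Finset ι))]
  refine sum_congr rfl fun s _ ↦ ?_
  rw [filter_filter,
    sum_congr rfl fun g hg ↦ prod_ite_eq_zero_of_zeroSet A B (mem_filter.1 hg).2.2,
    sum_const, nsmul_eq_mul, mul_comm, card_sum_eq_and_zeroSet_eq,
    card_nonzeroTuplesWithSum_congr (κ := Fin (Fintype.card ι - #s)) (Fintype.equivFinOfCardEq ?_)]
  simp [Fintype.card_subtype_compl]

theorem sum_prod_ite_eq_zero_eq_sum_choose {R : Type*} [CommSemiring R] (A B : R) (K : M) :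
    ∑ g : ι → M with ∑ j, g j = K, ∏ j, (if g j = 0 then A else B)
      = ∑ i ∈ range (Fintype.card ι + 1), (Fintype.card ι).choose i *
          (A ^ i * B ^ (Fintype.card ι - i) *
            #(nonzeroTuplesWithSum (Fin (Fintype.card ι - i)) K)) := by
  rw [sum_prod_ite_eq_zero_eq_sum_finset, ← powerset_univ,
    sum_powerset_apply_card fun i ↦ A ^ i * B ^ (Fintype.card ι - i) *
      #(nonzeroTuplesWithSum (Fin (Fintype.card ι - i)) K),
    card_univ]
  simp only [nsmul_eq_mul]

end NonzeroTuples

theorem psi_m_sum_formula_general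
    (F : Type*) [Field F] [Fintype F] [DecidableEq F]
    (m : ℕ) (K : F) (hK : K ≠ 0) :
    (Finset.univ.filter
        (fun f : Fin m → F × F => ∑ j, (f j).1 * (f j).2 = K)).card
      = ∑ i ∈ Finset.range m,
          Nat.choose m i * (2 * Fintype.card F - 1) ^ i *
            (Fintype.card F - 1) ^ (m - i) *
            (Finset.univ.filter
              (fun y : Fin (m - i) → F => (∀ j, y j ≠ 0) ∧ ∑ j, y j = K)).card := by
  -- not `rfl`: the two sides reach `0 : F` through different instance paths
  have hS (n : ℕ) : nonzeroTuplesWithSum (Fin n) K =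
      ({y | (∀ j, y j ≠ 0) ∧ ∑ j, y j = K} : Finset (Fin n → F)) := by
    unfold nonzeroTuplesWithSum; congr
  have hlast : #(nonzeroTuplesWithSum (Fin (m - m)) K) = 0 := by
    rw [Nat.sub_self, nonzeroTuplesWithSum_of_isEmpty hK, card_empty]
  rw [card_filter_comp_eq_sum_prod_card_fiber (fun p : F × F ↦ p.1 * p.2) (∑ j, · j = K)]
  simp_rw [card_filter_mul_eq]
  rw [sum_prod_ite_eq_zero_eq_sum_choose, Fintype.card_fin, sum_range_succ, hlast]
  simp only [Nat.cast_id, mul_zero, add_zero, mul_assoc, hS]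

theorem psi_m_sum_formula
    (F : Type*) [Field F] [Fintype F] [DecidableEq F]
    (m : ℕ) (hm : 1 ≤ m) (K : F) (hK : K ≠ 0) :
    (Finset.univ.filter
        (fun f : Fin m → F × F => ∑ j, (f j).1 * (f j).2 = K)).card
      = ∑ i ∈ Finset.range m,
          Nat.choose m i * (2 * Fintype.card F - 1) ^ i *
            (Fintype.card F - 1) ^ (m - i) *
            (Finset.univ.filter
              (fun y : Fin (m - i) → F => (∀ j, y j ≠ 0) ∧ ∑ j, y j = K)).card :=
  psi_m_sum_formula_general F m K hK
end
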